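/- Let n ≥ 2, m ≥ 3, and let P be an m-th order, n-dimensional stochastic tensor on S = {1,…,n}. Suppose i, j ∈ S are distinct states that communicate (i ↔ j), and suppose that Σ_{k=1}^{∞} p^{(k)}_{j j j3 … j_m} = ∞ for all j3,…,j_m ∈ S (the series of nonnegative terms diverges for every tail). Then Σ_{k=1}^{∞} p^{(k)}_{i i i3 … i_m} = ∞ for all i3,…,i_m ∈ S. -/

import Mathlib

open Finset

/-- An `m`-th order, `n`-dimensional tensor with `m = r + 2`: the entry
`p_{i₁ i₂ … i_m}` is written `P i₁ t`, where `t = (i₂, …, i_m)` is the tail of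
`m - 1 = r + 1` indices. -/
abbrev HOTensor (n r : ℕ) := Fin n → (Fin (r + 1) → Fin n) → ℝ

/-- `P` is a stochastic tensor. -/
def IsStochasticT {n r : ℕ} (P : HOTensor n r) : Prop :=
  (∀ i t, 0 ≤ P i t ∧ P i t ≤ 1) ∧ ∀ t, ∑ i : Fin n, P i t = 1

/-- The product `A ⊠ B`:
`(A ⊠ B)_{i₁ i₂ … i_m} = Σ_j a_{i₁ j i₂ … i_{m-1}} b_{j i₂ … i_m}`. -/
def tmul {n r : ℕ} (A B : HOTensor n r) : HOTensor n r :=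
  fun i t => ∑ j : Fin n, A i (Fin.cons j (Fin.init t)) * B j t

/-- Tensor powers: `tpow P k` is `P^k`, with entries the `k`-step transition
probabilities `p^{(k)}_{i₁ … i_m}`; `P^0` is the identity tensor. -/
def tpow {n r : ℕ} (P : HOTensor n r) : ℕ → HOTensor n r
  | 0 => fun i t => if i = t 0 then 1 else 0
  | k + 1 => tmul (tpow P k) P

/-- `fpp P k` is the `(k+1)`-step first passage probability tensor `F^{[k+1]}`:
`f^{[1]} = p`, and `f^{[k+1]}_{i₁ i₂ … i_m} = Σ_{j ≠ i₁} f^{[k]}_{i₁ j i₂ … i_{m-1}} p_{j i₂ … i_m}`. -/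
def fpp {n r : ℕ} (P : HOTensor n r) : ℕ → HOTensor n r
  | 0 => P
  | k + 1 => fun i t =>
      ∑ j ∈ Finset.univ.filter (fun j => j ≠ i), fpp P k i (Fin.cons j (Fin.init t)) * P j t

/-- The ever-reaching probability `f_{i₁ i₂ … i_m} = Σ_{k=1}^∞ f^{[k]}_{i₁ i₂ … i_m}`. -/
noncomputable def everReach {n r : ℕ} (P : HOTensor n r) : HOTensor n r :=
  fun i t => ∑' k : ℕ, fpp P k i t

/-- State `j` is reachable from state `i` (`i → j`): for every choice of
`i₃, …, i_m` there is `k ≥ 0` with `p^{(k)}_{j i i₃ … i_m} > 0`. -/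
def Reach {n r : ℕ} (P : HOTensor n r) (i j : Fin n) : Prop :=
  ∀ u : Fin r → Fin n, ∃ k : ℕ, 0 < tpow P k j (Fin.cons i u)

/-- States `i` and `j` communicate (`i ↔ j`). -/
def Comm {n r : ℕ} (P : HOTensor n r) (i j : Fin n) : Prop :=
  Reach P i j ∧ Reach P j i

/-- State `i` is recurrent: `f_{i i i₃ … i_m} = 1` for all `i₃, …, i_m`. -/
def RecurrentState {n r : ℕ} (P : HOTensor n r) (i : Fin n) : Prop :=
  ∀ u : Fin r → Fin n, everReach P i (Fin.cons i u) = 1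

/-- State `i` is fully transient: `f_{i i i₃ … i_m} < 1` for all `i₃, …, i_m`. -/
def FullyTransientState {n r : ℕ} (P : HOTensor n r) (i : Fin n) : Prop :=
  ∀ u : Fin r → Fin n, everReach P i (Fin.cons i u) < 1

/-- `P` is ergodic: for all indices there is `k ≥ 1` with `p^{(k)}_{i₁ … i_m} > 0`. -/
def ErgodicT {n r : ℕ} (P : HOTensor n r) : Prop :=
  ∀ (i : Fin n) (t : Fin (r + 1) → Fin n), ∃ k : ℕ, 1 ≤ k ∧ 0 < tpow P k i t

/-- `P` is regular: some power `P^k`, `k ≥ 1`, has all entries positive. -/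
def RegularT {n r : ℕ} (P : HOTensor n r) : Prop :=
  ∃ k : ℕ, 1 ≤ k ∧ ∀ (i : Fin n) (t : Fin (r + 1) → Fin n), 0 < tpow P k i t

/-- The reduced transition matrix `Q` of `P`: rows and columns are indexed by
`(m-1)`-tuples; the entry in row `(i₁, …, i_{m-1})` and column `(j₁, …, j_{m-1})`
is `p_{i₁ i₂ … i_{m-1} j_{m-1}}` if `j_ℓ = i_{ℓ+1}` for `ℓ = 1, …, m-2`, else `0`. -/
def reducedT {n r : ℕ} (P : HOTensor n r) :
    Matrix (Fin (r + 1) → Fin n) (Fin (r + 1) → Fin n) ℝ :=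
  fun u v =>
    if ∀ ℓ : Fin r, v ℓ.castSucc = u ℓ.succ then
      P (u 0) (Fin.snoc (Fin.tail u) (v (Fin.last r)))
    else 0

/-! Writing `Q` for the reduced transition matrix, a Markov chain on `(m-1)`-tuples of states,
every tensor power is a sum of entries of a matrix power:
`p^{(k)}_{i t} = Σ_s (Q^k)_{(i,s), t}`. Hence positivity of `p^{(k)}` produces a positive entry of
`Q^k`, divergence of `Σ_k p^{(k)}` produces a divergent `Σ_k (Q^k)_{v w}`, and for the nonnegative
matrix `Q` the bound `(Q^{b+k+a})_{x t} ≥ (Q^b)_{x v} (Q^k)_{v w} (Q^a)_{w t}` transfers divergence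
along communicating states, exactly as for Markov chains. -/

namespace Matrix

variable {ι : Type*} [Fintype ι] [DecidableEq ι]

theorem pow_apply_mul_pow_apply_le {R : Type*} [Semiring R] [PartialOrder R] [IsOrderedRing R]
    {Q : Matrix ι ι R} (hQ : ∀ x y, 0 ≤ Q x y) (a b : ℕ) (x y z : ι) :
    (Q ^ a) x y * (Q ^ b) y z ≤ (Q ^ (a + b)) x z := by
  rw [pow_add, mul_apply]
  exact Finset.single_le_sum
    (fun w _ => mul_nonneg (pow_apply_nonneg hQ a x w) (pow_apply_nonneg hQ b w z)) (mem_univ y)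

theorem not_summable_pow_apply_of_pos {Q : Matrix ι ι ℝ} (hQ : ∀ x y, 0 ≤ Q x y)
    {x v w t : ι} {a b : ℕ} (hxv : 0 < (Q ^ b) x v) (hwt : 0 < (Q ^ a) w t)
    (hvw : ¬ Summable fun k => (Q ^ (k + 1)) v w) :
    ¬ Summable fun k => (Q ^ (k + 1)) x t := by
  intro hxt
  apply hvw
  have hc : 0 < (Q ^ b) x v * (Q ^ a) w t := mul_pos hxv hwt
  have hbound (k : ℕ) :
      (Q ^ b) x v * (Q ^ a) w t * (Q ^ (k + 1)) v w ≤ (Q ^ (k + (b + a) + 1)) x t :=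
    calc (Q ^ b) x v * (Q ^ a) w t * (Q ^ (k + 1)) v w
        = (Q ^ b) x v * ((Q ^ (k + 1)) v w * (Q ^ a) w t) := by ring
      _ ≤ (Q ^ b) x v * (Q ^ (k + 1 + a)) v t :=
          mul_le_mul_of_nonneg_left (pow_apply_mul_pow_apply_le hQ _ _ v w t)
            (pow_apply_nonneg hQ b x v)
      _ ≤ (Q ^ (b + (k + 1 + a))) x t := pow_apply_mul_pow_apply_le hQ _ _ x v t
      _ = (Q ^ (k + (b + a) + 1)) x t := by rw [show b + (k + 1 + a) = k + (b + a) + 1 by omega]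
  have hscaled := ((summable_nat_add_iff (b + a)).2 hxt).of_nonneg_of_le
    (fun k => mul_nonneg hc.le (pow_apply_nonneg hQ _ v w)) hbound
  exact (summable_mul_left_iff hc.ne').1 hscaled

end Matrix

section ReducedMatrix

variable {n r : ℕ} (P : HOTensor n r)

theorem reducedT_nonneg (hP : ∀ i t, 0 ≤ P i t) (u v : Fin (r + 1) → Fin n) :
    0 ≤ reducedT P u v := by
  unfold reducedT
  split
  · exact hP _ _
  · exact le_rfl

theorem reducedT_cons_apply (j : Fin n) (s : Fin r → Fin n) (t : Fin (r + 1) → Fin n) :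
    reducedT P (Fin.cons j s) t = if s = Fin.init t then P j t else 0 := by
  have hshift : (∀ ℓ : Fin r, t ℓ.castSucc = (Fin.cons j s : Fin (r + 1) → Fin n) ℓ.succ) ↔
      s = Fin.init t := by
    simp [funext_iff, Fin.init, eq_comm]
  unfold reducedT
  simp only [hshift]
  split_ifs with hs
  · subst hs
    simp [Fin.snoc_init_self]
  · rfl

theorem reducedT_pow_succ_apply (k : ℕ) (u t : Fin (r + 1) → Fin n) :
    (reducedT P ^ (k + 1)) u t
      = ∑ j : Fin n, (reducedT P ^ k) u (Fin.cons j (Fin.init t)) * P j t := by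
  rw [pow_succ, Matrix.mul_apply, ← (Fin.consEquiv fun _ => Fin n).sum_comp,
    Fintype.sum_prod_type]
  simp [Fin.consEquiv, reducedT_cons_apply]

theorem tpow_eq_sum_reducedT_pow (k : ℕ) (i : Fin n) (t : Fin (r + 1) → Fin n) :
    tpow P k i t = ∑ s : Fin r → Fin n, (reducedT P ^ k) (Fin.cons i s) t := by
  induction k generalizing t with
  | zero =>
    obtain ⟨t₀, t', rfl⟩ : ∃ t₀ t', t = Fin.cons t₀ t' :=
      ⟨t 0, Fin.tail t, (Fin.cons_self_tail t).symm⟩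
    by_cases h : i = t₀ <;> simp [tpow, Matrix.one_apply, h]
  | succ k ih =>
    simp only [tpow, tmul, ih, reducedT_pow_succ_apply, Finset.sum_mul]
    exact Finset.sum_comm

theorem reducedT_pow_apply_le_tpow (hP : ∀ i t, 0 ≤ P i t) (k : ℕ) (i : Fin n)
    (s : Fin r → Fin n) (t : Fin (r + 1) → Fin n) :
    (reducedT P ^ k) (Fin.cons i s) t ≤ tpow P k i t := by
  rw [tpow_eq_sum_reducedT_pow]
  exact Finset.single_le_sum
    (fun s' _ => Matrix.pow_apply_nonneg (reducedT_nonneg P hP) k _ t) (mem_univ s)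

theorem exists_reducedT_pow_pos_of_tpow_pos {k : ℕ} {i : Fin n} {t : Fin (r + 1) → Fin n}
    (h : 0 < tpow P k i t) : ∃ s, 0 < (reducedT P ^ k) (Fin.cons i s) t := by
  rw [tpow_eq_sum_reducedT_pow] at h
  by_contra! hle
  exact h.not_ge (Finset.sum_nonpos fun s _ => hle s)

theorem exists_not_summable_reducedT_pow {i : Fin n} {t : Fin (r + 1) → Fin n}
    (h : ¬ Summable fun k => tpow P (k + 1) i t) :
    ∃ s, ¬ Summable fun k => (reducedT P ^ (k + 1)) (Fin.cons i s) t := by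
  by_contra! hs
  simp only [tpow_eq_sum_reducedT_pow] at h
  exact h (summable_sum fun s _ => hs s)

end ReducedMatrix

theorem divergence_transfers_general (n r : ℕ)
    (P : HOTensor n r) (hP : IsStochasticT P) (i j : Fin n)
    (hcomm : Comm P i j)
    (hdiv : ∀ u : Fin r → Fin n,
      ¬ Summable (fun k : ℕ => tpow P (k + 1) j (Fin.cons j u))) :
    ∀ u : Fin r → Fin n,
      ¬ Summable (fun k : ℕ => tpow P (k + 1) i (Fin.cons i u)) := by
  have hP₀ : ∀ i t, 0 ≤ P i t := fun i t => (hP.1 i t).1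
  have hQ := reducedT_nonneg P hP₀
  intro u hsum
  obtain ⟨a, hpa⟩ := hcomm.1 u
  obtain ⟨s, hs⟩ := exists_reducedT_pow_pos_of_tpow_pos P hpa
  obtain ⟨s', hs'⟩ := exists_not_summable_reducedT_pow P (hdiv s)
  obtain ⟨b, hpb⟩ := hcomm.2 s'
  obtain ⟨x, hx⟩ := exists_reducedT_pow_pos_of_tpow_pos P hpb
  refine Matrix.not_summable_pow_apply_of_pos hQ hx hs hs' ?_
  exact hsum.of_nonneg_of_le (fun k => Matrix.pow_apply_nonneg hQ _ _ _)
    fun k => reducedT_pow_apply_le_tpow P hP₀ _ _ _ _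

/-- if distinct states `i`, `j` communicate and
`Σ_{k≥1} p^{(k)}_{j j j₃ … j_m} = ∞` for all tails, then
`Σ_{k≥1} p^{(k)}_{i i i₃ … i_m} = ∞` for all tails (divergence = non-summability). -/
theorem divergence_transfers (n r : ℕ) (hn : 2 ≤ n) (hr : 1 ≤ r)
    (P : HOTensor n r) (hP : IsStochasticT P) (i j : Fin n) (hij : i ≠ j)
    (hcomm : Comm P i j)
    (hdiv : ∀ u : Fin r → Fin n,
      ¬ Summable (fun k : ℕ => tpow P (k + 1) j (Fin.cons j u))) :
    ∀ u : Fin r → Fin n,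
      ¬ Summable (fun k : ℕ => tpow P (k + 1) i (Fin.cons i u)) :=
  divergence_transfers_general n r P hP i j hcomm hdiv
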